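/- The sum Σ_{i∈S} Σ_{j∈S} |(a¹_i - a¹_j) - (a²_i - a²_j)| is at most 4·R·⌈m/2⌉·⌊m/2⌋ when both ratings take values in an interval of length R, where m = |S|; hence d_NPCK ≤ 1. -/

import Mathlib

/-!
Put `b = a¹ - a²`, so that the summand is `|b i - b j|` and `b` takes values in an interval of
length `2R`. For values in `[L, U]`, remove an element `x` where `b` is largest and an element `y`
where it is smallest: every remaining `j` satisfies `|b x - b j| + |b y - b j| = b x - b y ≤ U - L`,
so the double sum drops by at most `2 (U - L) (m - 1)`. Since `⌊(m + 2)² / 4⌋ = ⌊m² / 4⌋ + m + 1`,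
induction gives the bound `2 (U - L) ⌊m² / 4⌋`, and `⌊m² / 4⌋ = ⌈m / 2⌉ ⌊m / 2⌋`.
-/

open Finset

theorem Nat.add_one_div_two_mul_div_two (m : ℕ) : (m + 1) / 2 * (m / 2) = m ^ 2 / 4 := by
  obtain ⟨k, rfl | rfl⟩ := Nat.even_or_odd' m
  · rw [show (2 * k + 1) / 2 = k by omega, show 2 * k / 2 = k by omega,
      show (2 * k) ^ 2 = k ^ 2 * 4 by ring, Nat.mul_div_cancel _ (by norm_num), sq]
  · rw [show (2 * k + 1 + 1) / 2 = k + 1 by omega, show (2 * k + 1) / 2 = k by omega,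
      show (2 * k + 1) ^ 2 = 1 + (k + 1) * k * 4 by ring, Nat.add_mul_div_right _ _ (by norm_num)]
    simp

theorem Nat.add_two_sq_div_four (n : ℕ) : (n + 2) ^ 2 / 4 = n ^ 2 / 4 + (n + 1) := by
  rw [show (n + 2) ^ 2 = n ^ 2 + (n + 1) * 4 by ring, Nat.add_mul_div_right _ _ (by norm_num)]

section SumAbsSub

variable {ι : Type*} [DecidableEq ι] (b : ι → ℝ)

theorem sum_sum_abs_sub_insert {x : ι} {T : Finset ι} (hx : x ∉ T) :
    ∑ i ∈ insert x T, ∑ j ∈ insert x T, |b i - b j|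
      = ∑ i ∈ T, ∑ j ∈ T, |b i - b j| + 2 * ∑ j ∈ T, |b x - b j| := by
  simp only [sum_insert hx, sub_self, abs_zero, zero_add, sum_add_distrib,
    abs_sub_comm (b _) (b x)]
  ring

theorem sum_sum_abs_sub_insert_insert {x y : ι} {T : Finset ι} (hx : x ∉ insert y T)
    (hy : y ∉ T) (hyx : b y ≤ b x) (hT : ∀ j ∈ T, b j ∈ Set.Icc (b y) (b x)) :
    ∑ i ∈ insert x (insert y T), ∑ j ∈ insert x (insert y T), |b i - b j|
      = ∑ i ∈ T, ∑ j ∈ T, |b i - b j| + 2 * (T.card + 1) * (b x - b y) := by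
  have hpair : ∀ j ∈ T, |b x - b j| + |b y - b j| = b x - b y := fun j hj => by
    rw [abs_of_nonneg (sub_nonneg.2 (hT j hj).2), abs_of_nonpos (sub_nonpos.2 (hT j hj).1)]
    ring
  have hsum : ∑ j ∈ T, |b x - b j| + ∑ j ∈ T, |b y - b j| = T.card * (b x - b y) := by
    rw [← sum_add_distrib, sum_congr rfl hpair, sum_const, nsmul_eq_mul]
  rw [sum_sum_abs_sub_insert b hx, sum_sum_abs_sub_insert b hy, sum_insert hy,
    abs_of_nonneg (sub_nonneg.2 hyx)]
  linear_combination 2 * hsum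

theorem sum_sum_abs_sub_le {L U : ℝ} (S : Finset ι) (hb : ∀ i ∈ S, b i ∈ Set.Icc L U) :
    ∑ i ∈ S, ∑ j ∈ S, |b i - b j| ≤ 2 * (U - L) * (S.card ^ 2 / 4 : ℕ) := by
  induction S using Finset.strongInduction with
  | H S ih =>
  rcases lt_or_ge S.card 2 with hS | hS
  · have hzero : ∀ i ∈ S, ∀ j ∈ S, |b i - b j| = 0 := fun i hi j hj => by
      rw [card_le_one.1 (by omega) i hi j hj, sub_self, abs_zero]
    rw [sum_eq_zero fun i hi => sum_eq_zero (hzero i hi),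
      Nat.div_eq_of_lt (by nlinarith : S.card ^ 2 < 4)]
    simp
  obtain ⟨x, hxS, hxmax⟩ := S.exists_max_image b (card_pos.1 (by omega))
  obtain ⟨y, hyS, hymin⟩ := (S.erase x).exists_min_image b
    (card_pos.1 (by rw [card_erase_of_mem hxS]; omega))
  set T := (S.erase x).erase y
  have hST : insert x (insert y T) = S := by rw [insert_erase hyS, insert_erase hxS]
  have hcard : S.card = T.card + 2 := by
    rw [card_erase_of_mem hyS, card_erase_of_mem hxS]; omega
  have hyx : b y ≤ b x := hxmax y (mem_of_mem_erase hyS)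
  have hT : ∀ j ∈ T, b j ∈ Set.Icc (b y) (b x) := fun j hj =>
    ⟨hymin j (mem_of_mem_erase hj), hxmax j (mem_of_mem_erase (mem_of_mem_erase hj))⟩
  have hTS : T ⊂ S := (erase_subset _ _).trans_ssubset (erase_ssubset hxS)
  have hxy : b x - b y ≤ U - L := by linarith [(hb x hxS).2, (hb y (mem_of_mem_erase hyS)).1]
  have hih := ih T hTS fun i hi => hb i (hTS.subset hi)
  have hx : x ∉ insert y T := by
    rw [mem_insert]
    rintro (hxy' | hxT)
    · exact ne_of_mem_erase hyS hxy'.symm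
    · exact notMem_erase x S (mem_of_mem_erase hxT)
  conv_lhs => rw [← hST, sum_sum_abs_sub_insert_insert b hx (notMem_erase _ _) hyx hT]
  rw [hcard, Nat.add_two_sq_div_four]
  calc ∑ i ∈ T, ∑ j ∈ T, |b i - b j| + 2 * (T.card + 1) * (b x - b y)
      ≤ 2 * (U - L) * (T.card ^ 2 / 4 : ℕ) + 2 * (T.card + 1) * (U - L) := by gcongr
    _ = 2 * (U - L) * ((T.card ^ 2 / 4 + (T.card + 1) : ℕ) : ℝ) := by push_cast; ring

end SumAbsSub

/-- The double sum of absolute differences of separation gaps is bounded by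
`4·R·⌈m/2⌉·⌊m/2⌋`, hence the NPCK distance is at most 1. -/
theorem npck_sum_le {V : Type*} [DecidableEq V]
    (S : Finset V) (m : ℕ) (hm : m = S.card)
    (a1 a2 : V → ℝ) (ℓ u : ℝ) (R : ℝ) (hR : R = u - ℓ)
    (h1 : ∀ i ∈ S, a1 i ∈ Set.Icc ℓ u) (h2 : ∀ i ∈ S, a2 i ∈ Set.Icc ℓ u) :
    ∑ i ∈ S, ∑ j ∈ S, |(a1 i - a1 j) - (a2 i - a2 j)|
      ≤ 4 * R * ((m + 1) / 2 : ℕ) * ((m / 2 : ℕ) : ℝ) := by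
  have hdiff : ∀ i ∈ S, a1 i - a2 i ∈ Set.Icc (ℓ - u) (u - ℓ) := fun i hi =>
    ⟨by linarith [(h1 i hi).1, (h2 i hi).2], by linarith [(h1 i hi).2, (h2 i hi).1]⟩
  calc ∑ i ∈ S, ∑ j ∈ S, |(a1 i - a1 j) - (a2 i - a2 j)|
      = ∑ i ∈ S, ∑ j ∈ S, |(a1 - a2) i - (a1 - a2) j| := by
        simp only [Pi.sub_apply, sub_sub_sub_comm]
    _ ≤ 2 * ((u - ℓ) - (ℓ - u)) * (S.card ^ 2 / 4 : ℕ) := sum_sum_abs_sub_le (a1 - a2) S hdiff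
    _ = 4 * R * ((m + 1) / 2 : ℕ) * ((m / 2 : ℕ) : ℝ) := by
        rw [hm, hR, mul_assoc _ (((S.card + 1) / 2 : ℕ) : ℝ), ← Nat.cast_mul,
          Nat.add_one_div_two_mul_div_two]
        ring
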